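/- Let (H, ⇀, ↼) be a matched pair of actions on a Hopf algebra H satisfying the involutivity condition x ↼ y = S(x₁ ⇀ y) ⇀ x₂ for all x, y. Then the left adjoint action of the transmuted Hopf algebra H_⇀ is trivial: ad_{L,x}(y) = x₁(S(x₄) ⇀ y₁)(S(S(x₃) ⇀ y₂) ⇀ S(x₂)) = ε(x)y for all x, y ∈ H. -/

import Mathlib

/-!
The antipode is an anti-coalgebra map, so for `z = x₂` the factor
`(S x₄ ⇀ y₁)(S(S x₃ ⇀ y₂) ⇀ S x₂)` is `((S z)₁ ⇀ y₁)(S((S z)₂ ⇀ y₂) ⇀ (S z)₃)`. By the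
involutivity condition this is `((S z)₁ ⇀ y₁)((S z)₂ ↼ y₂)`, which the matched-pair axiom
`ab = (a₁ ⇀ b₁)(a₂ ↼ b₂)` collapses to `S(x₂) y`. Hence `ad_{L,x}(y) = x₁ S(x₂) y = ε(x) y`.
-/

open TensorProduct Coalgebra HopfAlgebra LinearMap

noncomputable section

universe w

variable (k H : Type*) [CommRing k] [Ring H] [HopfAlgebra k H]

/-- `f` is a left `H`-module coalgebra action of the Hopf algebra `H` on itself. -/
structure IsLeftModCoalgAction (f : H ⊗[k] H →ₗ[k] H) : Prop where
  one_act : ∀ a : H, f (1 ⊗ₜ a) = a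
  mul_act : ∀ x y a : H, f ((x * y) ⊗ₜ a) = f (x ⊗ₜ f (y ⊗ₜ a))
  counit_act : ∀ x a : H, counit (R := k) (f (x ⊗ₜ a)) = counit (R := k) x * counit (R := k) a
  comul_act : ∀ (x a : H) {ι κ : Type w} (rx : Coalgebra.Repr k x ι) (ra : Coalgebra.Repr k a κ),
      comul (R := k) (f (x ⊗ₜ a)) =
        ∑ i ∈ rx.index, ∑ j ∈ ra.index,
          f (rx.left i ⊗ₜ ra.left j) ⊗ₜ[k] f (rx.right i ⊗ₜ ra.right j)

/-- `g` is a right `H`-module coalgebra action of the Hopf algebra `H` on itself. -/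
structure IsRightModCoalgAction (g : H ⊗[k] H →ₗ[k] H) : Prop where
  act_one : ∀ x : H, g (x ⊗ₜ 1) = x
  act_mul : ∀ x a b : H, g (x ⊗ₜ (a * b)) = g (g (x ⊗ₜ a) ⊗ₜ b)
  counit_act : ∀ x a : H, counit (R := k) (g (x ⊗ₜ a)) = counit (R := k) x * counit (R := k) a
  comul_act : ∀ (x a : H) {ι κ : Type w} (rx : Coalgebra.Repr k x ι) (ra : Coalgebra.Repr k a κ),
      comul (R := k) (g (x ⊗ₜ a)) =
        ∑ i ∈ rx.index, ∑ j ∈ ra.index,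
          g (rx.left i ⊗ₜ ra.left j) ⊗ₜ[k] g (rx.right i ⊗ₜ ra.right j)

/-- `(H, f, g)` (written `(H, ⇀, ↼)`) is a matched pair of actions on the Hopf algebra `H`:
`f` is a left module coalgebra action, `g` a right module coalgebra action, satisfying the
matched pair conditions (MP1)–(MP5) and the extra condition `xy = (x₁ ⇀ y₁)(x₂ ↼ y₂)`. -/
structure IsMatchedPairOfActions (f g : H ⊗[k] H →ₗ[k] H) : Prop where
  left_action : IsLeftModCoalgAction.{w} k H f
  right_action : IsRightModCoalgAction.{w} k H g
  mp1 : ∀ (x a b : H) {ι κ : Type w} (rx : Coalgebra.Repr k x ι) (ra : Coalgebra.Repr k a κ),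
      f (x ⊗ₜ (a * b)) =
        ∑ i ∈ rx.index, ∑ j ∈ ra.index,
          f (rx.left i ⊗ₜ ra.left j) * f (g (rx.right i ⊗ₜ ra.right j) ⊗ₜ b)
  mp2 : ∀ x : H, f (x ⊗ₜ 1) = counit (R := k) x • (1 : H)
  mp3 : ∀ (x y a : H) {ι κ : Type w} (ry : Coalgebra.Repr k y ι) (ra : Coalgebra.Repr k a κ),
      g ((x * y) ⊗ₜ a) =
        ∑ i ∈ ry.index, ∑ j ∈ ra.index,
          g (x ⊗ₜ f (ry.left i ⊗ₜ ra.left j)) * g (ry.right i ⊗ₜ ra.right j)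
  mp4 : ∀ a : H, g ((1 : H) ⊗ₜ a) = counit (R := k) a • (1 : H)
  mp5 : ∀ (x a : H) {ι κ : Type w} (rx : Coalgebra.Repr k x ι) (ra : Coalgebra.Repr k a κ),
      (∑ i ∈ rx.index, ∑ j ∈ ra.index,
        f (rx.left i ⊗ₜ ra.left j) ⊗ₜ[k] g (rx.right i ⊗ₜ ra.right j)) =
      ∑ i ∈ rx.index, ∑ j ∈ ra.index,
        f (rx.right i ⊗ₜ ra.right j) ⊗ₜ[k] g (rx.left i ⊗ₜ ra.left j)
  mp_mul : ∀ (x y : H) {ι κ : Type w} (rx : Coalgebra.Repr k x ι) (ry : Coalgebra.Repr k y κ),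
      x * y = ∑ i ∈ rx.index, ∑ j ∈ ry.index,
        f (rx.left i ⊗ₜ ry.left j) * g (rx.right i ⊗ₜ ry.right j)

/-- The braiding operator `r(x ⊗ y) = (x₁ ⇀ y₁) ⊗ (x₂ ↼ y₂)` associated to the pair `(f, g)`. -/
def braidOp (f g : H ⊗[k] H →ₗ[k] H) : H ⊗[k] H →ₗ[k] H ⊗[k] H :=
  TensorProduct.map f g ∘ₗ (tensorTensorTensorComm k H H H H).toLinearMap
    ∘ₗ TensorProduct.map (comul (R := k)) (comul (R := k))


universe v

namespace HopfAlgebra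

variable {R A B : Type*} [CommSemiring R] [Semiring A] [HopfAlgebra R A] [Semiring B] [Algebra R B]

open WithConv

lemma algHom_comp_antipode_convMul (φ : A →ₐ[R] B) :
    toConv (φ.toLinearMap ∘ₗ antipode R) * toConv φ.toLinearMap = 1 := by
  ext a
  simp [(ℛ R a).convMul_apply, ← map_mul, ← map_sum, sum_antipode_mul_eq_algebraMap_counit]

lemma comul_eq_includeLeft_convMul_includeRight :
    toConv (comul (R := R) (A := A)) =
      toConv (Algebra.TensorProduct.includeLeft (S := R) : A →ₐ[R] A ⊗[R] A).toLinearMap *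
        toConv (Algebra.TensorProduct.includeRight : A →ₐ[R] A ⊗[R] A).toLinearMap := by
  ext a
  simp [(ℛ R a).convMul_apply, ← (ℛ R a).eq]

/-- Since `Δ = ι₁ * ι₂` in the convolution algebra (`ι₁ a = a ⊗ 1`, `ι₂ a = 1 ⊗ a`) and each
`ιₖ ∘ S` is a left inverse of `ιₖ`, `(ι₂ ∘ S) * (ι₁ ∘ S)` is a left inverse of `Δ`, while
`Δ ∘ S` is a right inverse. -/
theorem comul_comp_antipode :
    comul (R := R) ∘ₗ antipode R (A := A) =
      (toConv ((Algebra.TensorProduct.includeRight : A →ₐ[R] A ⊗[R] A).toLinearMap ∘ₗ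
          antipode R) *
        toConv ((Algebra.TensorProduct.includeLeft (S := R) : A →ₐ[R] A ⊗[R] A).toLinearMap ∘ₗ
          antipode R)).ofConv := by
  refine (congrArg ofConv (left_inv_eq_right_inv (M := WithConv (A →ₗ[R] A ⊗[R] A))
    (a := toConv comul) ?_ comul_right_inv)).symm
  rw [comul_eq_includeLeft_convMul_includeRight, mul_assoc,
    ← mul_assoc (b := toConv (AlgHom.toLinearMap _)), algHom_comp_antipode_convMul, one_mul,
    algHom_comp_antipode_convMul]

theorem sum_antipode_tmul_antipode {a : A} {ι : Type*} (r : Repr R a ι) :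
    ∑ i ∈ r.index, antipode R (r.right i) ⊗ₜ[R] antipode R (r.left i) =
      comul (antipode R a) := by
  rw [← LinearMap.comp_apply, comul_comp_antipode, r.convMul_apply]
  simp

end HopfAlgebra

theorem Finset.sum_univ_ulift_equivFin_symm {ι β : Type*} [AddCommMonoid β] (s : Finset ι)
    (F : ι → β) : ∑ i : ULift.{v} (Fin s.card), F (s.equivFin.symm i.down) = ∑ i ∈ s, F i := by
  rw [← Finset.sum_coe_sort s, ← s.equivFin.symm.sum_comp]
  exact Equiv.ulift.sum_comp fun j => F (s.equivFin.symm j)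

namespace Coalgebra.Repr

variable {R A : Type*} [CommSemiring R] {a : A} {ι : Type*}

@[simps]
def antipode [Semiring A] [HopfAlgebra R A] (r : Repr R a ι) :
    Repr R (HopfAlgebra.antipode R a) ι where
  index := r.index
  left i := HopfAlgebra.antipode R (r.right i)
  right i := HopfAlgebra.antipode R (r.left i)
  eq := HopfAlgebra.sum_antipode_tmul_antipode r

variable [AddCommMonoid A] [Module R A] [CoalgebraStruct R A]

/-- Reindexing into an arbitrary universe, since the matched-pair axioms and the involutivity
hypothesis only speak about representations indexed in one fixed universe each. -/
def toULiftFin (r : Repr R a ι) : Repr R a (ULift.{v} (Fin r.index.card)) where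
  index := Finset.univ
  left i := r.left (r.index.equivFin.symm i.down)
  right i := r.right (r.index.equivFin.symm i.down)
  eq := by
    rw [← r.eq]
    exact Finset.sum_univ_ulift_equivFin_symm _ fun i => r.left i ⊗ₜ r.right i

lemma sum_toULiftFin {β : Type*} [AddCommMonoid β] (r : Repr R a ι) (F : A → A → β) :
    ∑ i ∈ (r.toULiftFin.{v}).index, F (r.toULiftFin.left i) (r.toULiftFin.right i) =
      ∑ i ∈ r.index, F (r.left i) (r.right i) :=
  Finset.sum_univ_ulift_equivFin_symm _ fun i => F (r.left i) (r.right i)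

end Coalgebra.Repr

section MatchedPair

variable {k H : Type*} [CommRing k] [Ring H] [HopfAlgebra k H] {f g : H ⊗[k] H →ₗ[k] H}

theorem IsMatchedPairOfActions.mul_eq_sum (h : IsMatchedPairOfActions.{w} k H f g) (x y : H)
    {ι κ : Type*} (rx : Repr k x ι) (ry : Repr k y κ) :
    x * y = ∑ i ∈ rx.index, ∑ j ∈ ry.index,
      f (rx.left i ⊗ₜ ry.left j) * g (rx.right i ⊗ₜ ry.right j) := by
  rw [h.mp_mul x y rx.toULiftFin ry.toULiftFin, rx.sum_toULiftFin fun l r =>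
    ∑ j ∈ ry.toULiftFin.index, f (l ⊗ₜ ry.toULiftFin.left j) * g (r ⊗ₜ ry.toULiftFin.right j)]
  exact Finset.sum_congr rfl fun i _ => ry.sum_toULiftFin fun l r =>
    f (rx.left i ⊗ₜ l) * g (rx.right i ⊗ₜ r)

/-- Write `S z * y = ((S z)₁ ⇀ y₁)((S z)₂ ↼ y₂)`, expand `↼` by involutivity and reassociate the
iterated coproduct `S z₃ ⊗ S z₂ ⊗ S z₁` of `S z`. -/
theorem IsMatchedPairOfActions.antipode_mul_eq_sum (h : IsMatchedPairOfActions.{w} k H f g)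
    (hinv : ∀ (x y : H) {ι : Type v} (rx : Repr k x ι),
      g (x ⊗ₜ y) = ∑ i ∈ rx.index, f (antipode k (f (rx.left i ⊗ₜ y)) ⊗ₜ rx.right i))
    (z y : H) {ι : Type*} (rz : Repr k z ι) {ι₂ : ι → Type*}
    (rz₂ : ∀ j, Repr k (rz.right j) (ι₂ j)) {ιy : Type*} (ry : Repr k y ιy) :
    antipode k z * y =
      ∑ j ∈ rz.index, ∑ l ∈ (rz₂ j).index, ∑ m ∈ ry.index,
        f (antipode k ((rz₂ j).right l) ⊗ₜ ry.left m) *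
          f (antipode k (f (antipode k ((rz₂ j).left l) ⊗ₜ ry.right m)) ⊗ₜ
            antipode k (rz.left j)) := by
  let rS₂ j : Repr k (antipode k (rz.left j)) _ := (ℛ k _).toULiftFin.{v}
  let T (y₁ y₂ : H) : H ⊗[k] (H ⊗[k] H) →ₗ[k] H := LinearMap.mul' k H ∘ₗ
    TensorProduct.map (f ∘ₗ (TensorProduct.mk k H H).flip y₁)
      (f ∘ₗ rTensor H (antipode k ∘ₗ f ∘ₗ (TensorProduct.mk k H H).flip y₂))
  have hT (y₁ y₂ u v w : H) :
      T y₁ y₂ (u ⊗ₜ (v ⊗ₜ w)) = f (u ⊗ₜ y₁) * f (antipode k (f (v ⊗ₜ y₂)) ⊗ₜ w) := rfl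
  have coassoc (y₁ y₂ : H) := congrArg (T y₁ y₂)
    (sum_tmul_tmul_eq rz.antipode (fun j => (rz₂ j).antipode) rS₂)
  simp only [map_sum, hT, Repr.antipode_left, Repr.antipode_right, Repr.antipode_index] at coassoc
  rw [h.mul_eq_sum _ y rz.antipode ry, Finset.sum_comm]
  simp only [Repr.antipode_index, Repr.antipode_left, Repr.antipode_right, hinv _ _ (rS₂ _),
    Finset.mul_sum, ← coassoc]
  exact Finset.sum_comm.trans (Finset.sum_congr rfl fun j _ => Finset.sum_comm)

end MatchedPair

/-- Under the involutivity condition `x ↼ y = S(x₁ ⇀ y) ⇀ x₂`, the left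
adjoint action of `H_⇀` is trivial:
`x₁ (S(x₄) ⇀ y₁) (S(S(x₃) ⇀ y₂) ⇀ S(x₂)) = ε(x) y`. -/
theorem stmt14 (f g : H ⊗[k] H →ₗ[k] H) (h : IsMatchedPairOfActions k H f g)
    (hinv : ∀ (x y : H) {ι : Type*} (rx : Coalgebra.Repr k x ι),
      g (x ⊗ₜ y) =
        ∑ i ∈ rx.index, f (antipode (R := k) (f (rx.left i ⊗ₜ y)) ⊗ₜ rx.right i))
    (x y : H) {ι : Type*} (rx : Coalgebra.Repr k x ι) {ι₂ : ι → Type*}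
    (rx2 : ∀ i, Coalgebra.Repr k (rx.right i) (ι₂ i)) {ι₃ : ∀ i, ι₂ i → Type*}
    (rx3 : ∀ i j, Coalgebra.Repr k ((rx2 i).right j) (ι₃ i j)) {ιy : Type*}
    (ry : Coalgebra.Repr k y ιy) :
    (∑ i ∈ rx.index, ∑ j ∈ (rx2 i).index, ∑ l ∈ (rx3 i j).index, ∑ m ∈ ry.index,
        rx.left i * f (antipode (R := k) ((rx3 i j).right l) ⊗ₜ ry.left m) *
          f (antipode (R := k) (f (antipode (R := k) ((rx3 i j).left l) ⊗ₜ ry.right m)) ⊗ₜ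
              antipode (R := k) ((rx2 i).left j))) =
      counit (R := k) x • y := by
  calc _ = ∑ i ∈ rx.index, rx.left i * (antipode k (rx.right i) * y) := by
        refine Finset.sum_congr rfl fun i _ => ?_
        simp only [h.antipode_mul_eq_sum hinv _ y (rx2 i) (rx3 i) ry, Finset.mul_sum, mul_assoc]
    _ = counit x • y := by
        simp only [← mul_assoc, ← Finset.sum_mul, sum_mul_antipode_eq_smul rx, smul_mul_assoc,
          one_mul]

end
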